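/- Let M be the real 20×13 matrix whose rows are: (60,−6,−3,0,0,0,0,0,0,0,0,0,0), (24,0,−3,0,0,−3,0,0,0,0,0,0,0), (0,0,0,0,0,−3,0,0,0,0,0,0,0), (0,6,0,−6,−3,−18,0,0,0,0,0,0,0), (0,0,12,−18,−6,−72,0,0,0,0,0,0,0), (0,0,0,0,−3,−21,0,0,0,0,0,0,0), (0,0,0,−6,−2,−18,0,0,0,0,0,0,0), (0,0,0,0,0,3,0,0,0,0,0,0,0), (0,0,0,0,0,54,12,−6,−3,0,0,0,0), (0,0,0,0,0,24,0,0,−3,0,0,0,0), (0,0,0,0,0,36,0,−6,−3,0,0,0,0), (0,0,0,0,3,−3,0,0,0,0,0,0,0), (0,0,0,0,6,−18,0,0,0,0,−6,0,0), (0,0,0,0,0,0,0,0,3,0,0,0,0), (0,0,0,0,0,0,0,0,6,−6,0,0,0), (0,0,0,6,−10,−18,0,0,0,0,0,0,−6), (0,6,−6,0,3,6,0,0,0,0,0,−6,0), (0,0,0,0,6,18,0,6,−9,0,6,0,0), (0,0,0,0,0,0,0,0,6,6,0,0,0), (0,−6,6,−3,3,3,0,0,0,0,0,6,3). Let v₁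 = (0,0,−14,0,0,2,0,0,0,0,0,0,0,0,0,3,6,0,0,6), v₂ = (0,0,32,0,0,0,0,0,0,4,0,0,0,0,1,0,0,0,1,0), v₃ = (0,0,−48,0,0,4,0,0,0,−4,1,0,1,0,0,0,0,1,0,0), v₄ = (0,0,8,0,0,0,0,0,0,1,0,0,0,1,0,0,0,0,0,0), v₅ = (0,0,−8,0,0,1,0,0,0,0,0,1,0,0,0,0,0,0,0,0), v₆ = (0,0,1,0,0,0,0,1,0,0,0,0,0,0,0,0,0,0,0,0), v₇ = (24,−60,170,24,−9,−8,3,0,0,0,0,0,0,0,0,0,0,0,0,0) in ℝ²⁰. Then: (i) vⱼᵀ M = 0 for each j = 1,…,7; (ii) v₁,…,v₇ are linearly independent; and (iii) {v ∈ ℝ²⁰ : vᵀ M = 0} = span{v₁,…,v₇}, equivalently the rank of M equals 13, so that the orthogonal complement of the column space of M in ℝ²⁰ is spanned by v₁,…,v₇. -/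

import Mathlib

/-- The 20×13 coefficient matrix `M` of the linear system determining the second
normal form generator `G₄` in the Hiraoka–Kodama normalisation on the torus. -/
noncomputable def Mmat : Matrix (Fin 20) (Fin 13) ℝ :=
  !![60, -6, -3, 0, 0, 0, 0, 0, 0, 0, 0, 0, 0;
     24, 0, -3, 0, 0, -3, 0, 0, 0, 0, 0, 0, 0;
     0, 0, 0, 0, 0, -3, 0, 0, 0, 0, 0, 0, 0;
     0, 6, 0, -6, -3, -18, 0, 0, 0, 0, 0, 0, 0;
     0, 0, 12, -18, -6, -72, 0, 0, 0, 0, 0, 0, 0;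
     0, 0, 0, 0, -3, -21, 0, 0, 0, 0, 0, 0, 0;
     0, 0, 0, -6, -2, -18, 0, 0, 0, 0, 0, 0, 0;
     0, 0, 0, 0, 0, 3, 0, 0, 0, 0, 0, 0, 0;
     0, 0, 0, 0, 0, 54, 12, -6, -3, 0, 0, 0, 0;
     0, 0, 0, 0, 0, 24, 0, 0, -3, 0, 0, 0, 0;
     0, 0, 0, 0, 0, 36, 0, -6, -3, 0, 0, 0, 0;
     0, 0, 0, 0, 3, -3, 0, 0, 0, 0, 0, 0, 0;
     0, 0, 0, 0, 6, -18, 0, 0, 0, 0, -6, 0, 0;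
     0, 0, 0, 0, 0, 0, 0, 0, 3, 0, 0, 0, 0;
     0, 0, 0, 0, 0, 0, 0, 0, 6, -6, 0, 0, 0;
     0, 0, 0, 6, -10, -18, 0, 0, 0, 0, 0, 0, -6;
     0, 6, -6, 0, 3, 6, 0, 0, 0, 0, 0, -6, 0;
     0, 0, 0, 0, 6, 18, 0, 6, -9, 0, 6, 0, 0;
     0, 0, 0, 0, 0, 0, 0, 0, 6, 6, 0, 0, 0;
     0, -6, 6, -3, 3, 3, 0, 0, 0, 0, 0, 6, 3]

/-- The seven vectors `v₁, …, v₇ ∈ ℝ²⁰` spanning the left kernel of `M`. -/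
noncomputable def vvec : Fin 7 → Fin 20 → ℝ :=
  ![![0, 0, -14, 0, 0, 2, 0, 0, 0, 0, 0, 0, 0, 0, 0, 3, 6, 0, 0, 6],
    ![0, 0, 32, 0, 0, 0, 0, 0, 0, 4, 0, 0, 0, 0, 1, 0, 0, 0, 1, 0],
    ![0, 0, -48, 0, 0, 4, 0, 0, 0, -4, 1, 0, 1, 0, 0, 0, 0, 1, 0, 0],
    ![0, 0, 8, 0, 0, 0, 0, 0, 0, 1, 0, 0, 0, 1, 0, 0, 0, 0, 0, 0],
    ![0, 0, -8, 0, 0, 1, 0, 0, 0, 0, 0, 1, 0, 0, 0, 0, 0, 0, 0, 0],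
    ![0, 0, 1, 0, 0, 0, 0, 1, 0, 0, 0, 0, 0, 0, 0, 0, 0, 0, 0, 0],
    ![24, -60, 170, 24, -9, -8, 3, 0, 0, 0, 0, 0, 0, 0, 0, 0, 0, 0, 0, 0]]

/-! Each `vⱼ` has a coordinate (the 16th, 15th, 11th, 14th, 12th, 8th and 7th respectively) at
which it alone among the seven is nonzero, so they are linearly independent. Forward elimination
on `M x = 0` forces `x = 0`, so `rank M = 13` and the left kernel of `M` has dimension
`20 - 13 = 7`; the seven independent vectors `vⱼ` lie in it, hence span it. -/

open Matrix

theorem linearIndependent_of_pivot {R m ι : Type*} [Ring R] [NoZeroDivisors R]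
    {v : ι → m → R} (p : ι → m) (hdiag : ∀ i, v i (p i) ≠ 0)
    (hoff : ∀ i j, i ≠ j → v i (p j) = 0) : LinearIndependent R v := by
  classical
  rw [linearIndependent_iff']
  intro s g hg j hj
  have hpj : ∑ i ∈ s, g i * v i (p j) = g j * v j (p j) :=
    Finset.sum_eq_single j (fun i _ hij => by rw [hoff i j hij, mul_zero])
      (fun h => absurd hj h)
  have := congrFun hg (p j)
  simp only [Finset.sum_apply, Pi.smul_apply, smul_eq_mul, Pi.zero_apply, hpj] at this
  exact (mul_eq_zero.mp this).resolve_right (hdiag j)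

namespace Matrix

variable {K m n : Type*} [Field K] [Fintype n]

theorem rank_of_mulVec_injective {A : Matrix m n K} (hA : Function.Injective A.mulVec) :
    A.rank = Fintype.card n := by
  rw [rank, LinearMap.finrank_range_of_inj hA, Module.finrank_fintype_fun_eq_card]

theorem span_eq_ker_vecMulLinear [Fintype m] {ι : Type*} [Fintype ι] {A : Matrix m n K}
    {v : ι → m → K}
    (hv : LinearIndependent K v) (hvA : ∀ i, v i ᵥ* A = 0)
    (hcard : Fintype.card ι + A.rank = Fintype.card m) :
    Submodule.span K (Set.range v) = LinearMap.ker A.vecMulLinear := by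
  have hle : Submodule.span K (Set.range v) ≤ LinearMap.ker A.vecMulLinear := by
    rw [Submodule.span_le]
    rintro _ ⟨i, rfl⟩
    exact hvA i
  refine Submodule.eq_of_le_of_finrank_eq hle ?_
  have hrange : Module.finrank K (LinearMap.range A.vecMulLinear) = A.rank := by
    rw [← mulVecLin_transpose, ← rank, rank_transpose]
  have hnullity := LinearMap.finrank_range_add_finrank_ker A.vecMulLinear
  rw [hrange, Module.finrank_fintype_fun_eq_card] at hnullity
  rw [finrank_span_eq_card hv]
  omega

end Matrix

theorem vvec_vecMul_Mmat (j : Fin 7) : vvec j ᵥ* Mmat = 0 := by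
  fin_cases j <;> simp [vvec, Mmat] <;> norm_num

theorem linearIndependent_vvec : LinearIndependent ℝ vvec := by
  refine linearIndependent_of_pivot ![15, 14, 10, 13, 11, 7, 6] ?_ ?_
  · intro i
    fin_cases i <;> simp [vvec]
  · intro i j hij
    fin_cases i <;> fin_cases j <;> simp_all [vvec]

theorem Mmat_mulVec_injective : Function.Injective Mmat.mulVec := by
  rw [← coe_mulVecLin, injective_iff_map_eq_zero]
  intro x hx
  simp only [Mmat, mulVecBilin_apply, cons_mulVec, cons_dotProduct, vecHead, Fin.isValue, vecTail,
    Nat.succ_eq_add_one, Nat.reduceAdd, Function.comp_apply, Fin.succ_zero_eq_one, neg_mul,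
    Fin.succ_one_eq_two, Fin.reduceSucc, zero_mul, dotProduct_of_isEmpty, add_zero, zero_add,
    empty_mulVec, funext_iff, Pi.zero_apply, Fin.forall_fin_succ, cons_val_zero, cons_val_succ,
    neg_eq_zero, mul_eq_zero, OfNat.ofNat_ne_zero, false_or, cons_val_fin_one, forall_const] at hx
  obtain ⟨h0, h1, h2, h3, h4, h5, h6, h7, h8, h9, h10, h11, h12, h13, h14, h15, h16, h17, h18,
    h19⟩ := hx
  ext i
  fin_cases i <;> simp <;> linarith

/-- (i) Each `vⱼ` satisfies `vⱼᵀM = 0`; (ii) `v₁, …, v₇` are linearly independent;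
(iii) the left kernel of `M` equals their span, equivalently `rank M = 13`, so the
orthogonal complement of the column space of `M` in `ℝ²⁰` is spanned by `v₁, …, v₇`. -/
theorem stmt_18 :
    (∀ j : Fin 7, Matrix.vecMul (vvec j) Mmat = 0) ∧
    LinearIndependent ℝ vvec ∧
    (∀ v : Fin 20 → ℝ,
      Matrix.vecMul v Mmat = 0 ↔ v ∈ Submodule.span ℝ (Set.range vvec)) ∧
    Mmat.rank = 13 := by
  have hrank : Mmat.rank = 13 := by simpa using rank_of_mulVec_injective Mmat_mulVec_injective
  have hspan := span_eq_ker_vecMulLinear linearIndependent_vvec vvec_vecMul_Mmat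
    (by simp [hrank])
  refine ⟨vvec_vecMul_Mmat, linearIndependent_vvec, fun v => ?_, hrank⟩
  rw [hspan, LinearMap.mem_ker, vecMulLinear_apply]
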